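/- arXiv:math/9712278 — 4 statements merged into one kernel-verified Lean document; each statement's English description precedes it below -/
import Mathlib

section
/- Let u: ℝ² → ℝ² be twice continuously differentiable and ℤ²-periodic, and let φ: ℝ² → ℝ be continuously differentiable and ℤ²-periodic. Then ∫_{[0,1)²} φ · det Du dx = ½ ∫_{[0,1)²} (∇×φ) · j(u) dx, where ∇×φ = (∂_{x₂}φ, −∂_{x₁}φ) and det Du is the Jacobian determinant of u. -/
noncomputable section

open MeasureTheory

/-- Partial derivative in the first coordinate direction. -/
def pd1 {E : Type*} [NormedAddCommGroup E] [NormedSpace ℝ E]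
    (f : ℝ × ℝ → E) (x : ℝ × ℝ) : E := fderiv ℝ f x (1, 0)

/-- Partial derivative in the second coordinate direction. -/
def pd2 {E : Type*} [NormedAddCommGroup E] [NormedSpace ℝ E]
    (f : ℝ × ℝ → E) (x : ℝ × ℝ) : E := fderiv ℝ f x (0, 1)

/-- Cross product of two planar vectors: `a × b = a¹b² − a²b¹`. -/
def cross (a b : ℝ × ℝ) : ℝ := a.1 * b.2 - a.2 * b.1

/-- The fundamental domain `[0,1)²` of the torus. -/
def fundSq : Set (ℝ × ℝ) := Set.Ico (0:ℝ) 1 ×ˢ Set.Ico (0:ℝ) 1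

/-!
Put `P = φ (u × ∂₂u)` and `Q = -φ (u × ∂₁u)`. By the product rule, and because the second-order
terms `u × ∂₁∂₂u` cancel by symmetry of the Hessian, `∂₁P + ∂₂Q = 2 φ det Du - (∇×φ) · j(u)`.
By the divergence theorem on `[0,1]²` the integral of `∂₁P + ∂₂Q` is a sum of boundary integrals,
which cancel in pairs because `P` is periodic in `x₁` and `Q` in `x₂`.
-/

open Function

section FDeriv

variable {𝕜 E F : Type*} [NontriviallyNormedField 𝕜] [NormedAddCommGroup E] [NormedSpace 𝕜 E]
  [NormedAddCommGroup F] [NormedSpace 𝕜 F]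

theorem Function.Periodic.fderiv {f : E → F} {c : E} (h : Periodic f c) :
    Periodic (fderiv 𝕜 f) c := fun x => by
  rw [← fderiv_comp_add_right, funext h]

theorem fderiv_fderiv_apply_eq_fderiv_apply {f : E → F} {x : E}
    (hf : DifferentiableAt 𝕜 (fderiv 𝕜 f) x) (v w : E) :
    fderiv 𝕜 (fderiv 𝕜 f) x v w = fderiv 𝕜 (fun y => fderiv 𝕜 f y w) x v := by
  rw [fderiv_clm_apply hf (differentiableAt_const w)]
  simp

end FDeriv

section VectorValued

variable {E : Type*} [NormedAddCommGroup E] [NormedSpace ℝ E]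

theorem Function.Periodic.pd1 {f : ℝ × ℝ → E} {c : ℝ × ℝ} (h : Periodic f c) :
    Periodic (pd1 f) c := fun x => congrArg (fun L : ℝ × ℝ →L[ℝ] E => L (1, 0)) (h.fderiv x)

theorem Function.Periodic.pd2 {f : ℝ × ℝ → E} {c : ℝ × ℝ} (h : Periodic f c) :
    Periodic (pd2 f) c := fun x => congrArg (fun L : ℝ × ℝ →L[ℝ] E => L (0, 1)) (h.fderiv x)

theorem ContDiff.pd1 {n : WithTop ℕ∞} {f : ℝ × ℝ → E} (hf : ContDiff ℝ (n + 1) f) :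
    ContDiff ℝ n (pd1 f) :=
  (hf.fderiv_right le_rfl).clm_apply contDiff_const

theorem ContDiff.pd2 {n : WithTop ℕ∞} {f : ℝ × ℝ → E} (hf : ContDiff ℝ (n + 1) f) :
    ContDiff ℝ n (pd2 f) :=
  (hf.fderiv_right le_rfl).clm_apply contDiff_const

theorem pd1_pd2_comm {f : ℝ × ℝ → E} (hf : ContDiff ℝ 2 f) (x : ℝ × ℝ) :
    pd1 (pd2 f) x = pd2 (pd1 f) x := by
  have hDf : DifferentiableAt ℝ (fderiv ℝ f) x :=
    (hf.fderiv_right (m := 1) le_rfl).differentiable one_ne_zero x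
  have hsymm := (hf.contDiffAt (x := x)).isSymmSndFDerivAt (by simp) (1, 0) (0, 1)
  rwa [fderiv_fderiv_apply_eq_fderiv_apply hDf, fderiv_fderiv_apply_eq_fderiv_apply hDf] at hsymm

end VectorValued

theorem ContDiff.cross {F : Type*} [NormedAddCommGroup F] [NormedSpace ℝ F] {n : WithTop ℕ∞}
    {a b : F → ℝ × ℝ} (ha : ContDiff ℝ n a) (hb : ContDiff ℝ n b) :
    ContDiff ℝ n fun y => cross (a y) (b y) :=
  (ha.fst.mul hb.snd).sub (ha.snd.mul hb.fst)

theorem fderiv_cross_apply {F : Type*} [NormedAddCommGroup F] [NormedSpace ℝ F]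
    {a b : F → ℝ × ℝ} {x : F} (ha : DifferentiableAt ℝ a x) (hb : DifferentiableAt ℝ b x) (v : F) :
    fderiv ℝ (fun y => cross (a y) (b y)) x v
      = cross (fderiv ℝ a x v) (b x) + cross (a x) (fderiv ℝ b x v) := by
  have ha' := ha.hasFDerivAt
  have hb' := hb.hasFDerivAt
  have h : HasFDerivAt (fun y => cross (a y) (b y)) _ x :=
    (ha'.fst.mul hb'.snd).sub (ha'.snd.mul hb'.fst)
  rw [h.fderiv]
  simp only [cross, sub_apply, add_apply, smul_apply, ContinuousLinearMap.comp_apply,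
    ContinuousLinearMap.coe_fst', ContinuousLinearMap.coe_snd', smul_eq_mul]
  ring

section PartialDerivatives

variable {a b : ℝ × ℝ → ℝ × ℝ} {f g : ℝ × ℝ → ℝ} {x : ℝ × ℝ}

theorem pd1_cross (ha : DifferentiableAt ℝ a x) (hb : DifferentiableAt ℝ b x) :
    pd1 (fun y => cross (a y) (b y)) x = cross (pd1 a x) (b x) + cross (a x) (pd1 b x) :=
  fderiv_cross_apply ha hb _

theorem pd2_cross (ha : DifferentiableAt ℝ a x) (hb : DifferentiableAt ℝ b x) :
    pd2 (fun y => cross (a y) (b y)) x = cross (pd2 a x) (b x) + cross (a x) (pd2 b x) :=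
  fderiv_cross_apply ha hb _

theorem pd1_mul (hf : DifferentiableAt ℝ f x) (hg : DifferentiableAt ℝ g x) :
    pd1 (fun y => f y * g y) x = pd1 f x * g x + f x * pd1 g x := by
  rw [pd1, fderiv_fun_mul hf hg]
  simp only [pd1, add_apply, smul_apply, smul_eq_mul]
  ring

theorem pd2_mul (hf : DifferentiableAt ℝ f x) (hg : DifferentiableAt ℝ g x) :
    pd2 (fun y => f y * g y) x = pd2 f x * g x + f x * pd2 g x := by
  rw [pd2, fderiv_fun_mul hf hg]
  simp only [pd2, add_apply, smul_apply, smul_eq_mul]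
  ring

theorem pd2_neg : pd2 (fun y => -f y) x = -pd2 f x := by
  rw [pd2, pd2, fderiv_fun_neg, neg_apply]

end PartialDerivatives

theorem pd1_cross_pd2_sub_pd2_cross_pd1 {u : ℝ × ℝ → ℝ × ℝ} (hu : ContDiff ℝ 2 u) (x : ℝ × ℝ) :
    pd1 (fun y => cross (u y) (pd2 u y)) x - pd2 (fun y => cross (u y) (pd1 u y)) x
      = 2 * cross (pd1 u x) (pd2 u x) := by
  have hu' : DifferentiableAt ℝ u x := hu.differentiable two_ne_zero x
  have hpd1 : DifferentiableAt ℝ (pd1 u) x := (hu.pd1 (n := 1)).differentiable one_ne_zero x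
  have hpd2 : DifferentiableAt ℝ (pd2 u) x := (hu.pd2 (n := 1)).differentiable one_ne_zero x
  rw [pd1_cross hu' hpd2, pd2_cross hu' hpd1, pd1_pd2_comm hu]
  simp only [cross]
  ring

theorem pd1_mul_cross_pd2_add_pd2_neg_mul_cross_pd1 {u : ℝ × ℝ → ℝ × ℝ} {φ : ℝ × ℝ → ℝ}
    (hu : ContDiff ℝ 2 u) (hφ : ContDiff ℝ 1 φ) (x : ℝ × ℝ) :
    pd1 (fun y => φ y * cross (u y) (pd2 u y)) x + pd2 (fun y => -(φ y * cross (u y) (pd1 u y))) x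
      = 2 * (φ x * cross (pd1 u x) (pd2 u x))
        - (pd2 φ x * cross (u x) (pd1 u x) + -pd1 φ x * cross (u x) (pd2 u x)) := by
  have hφ' : DifferentiableAt ℝ φ x := hφ.differentiable one_ne_zero x
  have hu' : ContDiff ℝ 1 u := hu.of_le one_le_two
  have hcross₁ := (hu'.cross (hu.pd1 (n := 1))).differentiable one_ne_zero x
  have hcross₂ := (hu'.cross (hu.pd2 (n := 1))).differentiable one_ne_zero x
  rw [pd2_neg, pd1_mul hφ' hcross₂, pd2_mul hφ' hcross₁]
  linear_combination φ x * pd1_cross_pd2_sub_pd2_cross_pd1 hu x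

theorem fundSq_ae_eq_Icc : fundSq =ᵐ[volume] Set.Icc ((0, 0) : ℝ × ℝ) (1, 1) := by
  rw [← Set.Icc_prod_Icc, Measure.volume_eq_prod]
  exact Measure.set_prod_ae_eq Ico_ae_eq_Icc Ico_ae_eq_Icc

theorem Continuous.integrableOn_fundSq {E : Type*} [NormedAddCommGroup E] {f : ℝ × ℝ → E}
    (hf : Continuous f) : IntegrableOn f fundSq :=
  hf.integrableOn_Icc.congr_set_ae fundSq_ae_eq_Icc

theorem integral_fundSq_pd1_add_pd2_eq_zero {E : Type*} [NormedAddCommGroup E] [NormedSpace ℝ E]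
    [CompleteSpace E] {P Q : ℝ × ℝ → E} (hP : ContDiff ℝ 1 P) (hQ : ContDiff ℝ 1 Q)
    (hPper : Periodic P (1, 0)) (hQper : Periodic Q (0, 1)) :
    ∫ x in fundSq, (pd1 P x + pd2 Q x) = 0 := by
  have hP_side : ∀ y : ℝ, P (1, y) = P (0, y) := fun y => by simpa using hPper (0, y)
  have hQ_side : ∀ x : ℝ, Q (x, 1) = Q (x, 0) := fun x => by simpa using hQper (x, 0)
  rw [setIntegral_congr_set fundSq_ae_eq_Icc]
  refine (integral_divergence_prod_Icc_of_hasFDerivAt_off_countable_of_le P Q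
    (fderiv ℝ P) (fderiv ℝ Q) (0, 0) (1, 1) (by norm_num) ∅ Set.countable_empty
    hP.continuous.continuousOn hQ.continuous.continuousOn
    (fun x _ => (hP.differentiable one_ne_zero x).hasFDerivAt)
    (fun x _ => (hQ.differentiable one_ne_zero x).hasFDerivAt)
    ((hP.pd1 (n := 0)).continuous.add (hQ.pd2 (n := 0)).continuous).integrableOn_Icc).trans ?_
  simp only [hP_side, hQ_side, sub_self, zero_add]

/-- for `u : ℝ² → ℝ²` twice continuously differentiable and ℤ²-periodic and
`φ : ℝ² → ℝ` continuously differentiable and ℤ²-periodic,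
`∫_{[0,1)²} φ · det Du dx = ½ ∫_{[0,1)²} (∇×φ) · j(u) dx`,
where `∇×φ = (∂₂φ, −∂₁φ)` and `j(u) = (u × ∂₁u, u × ∂₂u)`. -/
theorem integral_jacobian_eq_half_integral_curl_dot_current
    (u : ℝ × ℝ → ℝ × ℝ) (φ : ℝ × ℝ → ℝ)
    (hu : ContDiff ℝ 2 u) (hφ : ContDiff ℝ 1 φ)
    (huper : ∀ x : ℝ × ℝ, u (x + (1, 0)) = u x ∧ u (x + (0, 1)) = u x)
    (hφper : ∀ x : ℝ × ℝ, φ (x + (1, 0)) = φ x ∧ φ (x + (0, 1)) = φ x) :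
    ∫ x in fundSq, φ x * ((pd1 u x).1 * (pd2 u x).2 - (pd1 u x).2 * (pd2 u x).1)
      = (1 / 2) * ∫ x in fundSq,
          (pd2 φ x * cross (u x) (pd1 u x) + (-(pd1 φ x)) * cross (u x) (pd2 u x)) := by
  have hu₁ : Periodic u (1, 0) := fun x => (huper x).1
  have hu₂ : Periodic u (0, 1) := fun x => (huper x).2
  have hu' : ContDiff ℝ 1 u := hu.of_le one_le_two
  have hdiv := integral_fundSq_pd1_add_pd2_eq_zero
    (hφ.mul (hu'.cross (hu.pd2 (n := 1)))) (hφ.mul (hu'.cross (hu.pd1 (n := 1)))).neg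
    (fun y => by simp only [(hφper y).1, hu₁ y, hu₁.pd2 y])
    (fun y => by simp only [(hφper y).2, hu₂ y, hu₂.pd1 y])
  have hcont_u := hu.continuous
  have hcont_pd1 := (hu.pd1 (n := 1)).continuous
  have hcont_pd2 := (hu.pd2 (n := 1)).continuous
  have hcont_φ₁ := (hφ.pd1 (n := 0)).continuous
  have hcont_φ₂ := (hφ.pd2 (n := 0)).continuous
  rw [integral_congr_ae (ae_of_all _ (pd1_mul_cross_pd2_add_pd2_neg_mul_cross_pd1 hu hφ)),
    integral_sub (Continuous.integrableOn_fundSq (by unfold cross; fun_prop))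
      (Continuous.integrableOn_fundSq (by unfold cross; fun_prop)), integral_const_mul] at hdiv
  simp only [cross] at hdiv ⊢
  linarith
end
end

section
/- Let ε > 0 and let u: ℝ² × I → ℂ (I ⊆ ℝ an open interval) be smooth, ℤ²-periodic in the space variable, and solve the Ginzburg–Landau–Schrödinger equation i∂_t u − Δu + ε⁻²(|u|²−1)u = 0, where ℂ is identified with ℝ² and a·b = Re(ā b) denotes the real inner product. Then the Jacobian determinant Ju = det Du (the 2×2 spatial Jacobian) satisfies pointwise ∂_t(Ju) = Σ_{j,k,l ∈ {1,2}} 𝕁_{jk} ∂_{x_l}∂_{x_j}( ∂_{x_k}u · ∂_{x_l}u ), where 𝕁 is the matrix with 𝕁₁₂ = 1, 𝕁₂₁ = −1, 𝕁₁₁ = 𝕁₂₂ = 0. -/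
noncomputable section

/-- Unit direction in `x₁`. -/
def e1 : ℝ × ℝ × ℝ := (1, 0, 0)
/-- Unit direction in `x₂`. -/
def e2 : ℝ × ℝ × ℝ := (0, 1, 0)
/-- Unit direction in time `t`. -/
def et : ℝ × ℝ × ℝ := (0, 0, 1)

/-- Directional (partial) derivative in the direction `v`. -/
def pd {E : Type*} [NormedAddCommGroup E] [NormedSpace ℝ E]
    (v : ℝ × ℝ × ℝ) (f : ℝ × ℝ × ℝ → E) (p : ℝ × ℝ × ℝ) : E := fderiv ℝ f p v

/-- The real inner product on `ℂ ≃ ℝ²`: `a·b = Re(ā b)`. -/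
def rdot (a b : ℂ) : ℝ := ((starRingEnd ℂ) a * b).re

/-- Spatial Laplacian. -/
def lap (u : ℝ × ℝ × ℝ → ℂ) (p : ℝ × ℝ × ℝ) : ℂ :=
  pd e1 (pd e1 u) p + pd e2 (pd e2 u) p

/-- `u` is ℤ²-periodic in the space variables. -/
def SpacePeriodic (u : ℝ × ℝ × ℝ → ℂ) : Prop :=
  ∀ p : ℝ × ℝ × ℝ, u (p + e1) = u p ∧ u (p + e2) = u p

/-- `u` solves the Ginzburg–Landau–Schrödinger equation
`i∂ₜu − Δu + ε⁻²(|u|²−1)u = 0` at the point `p`. -/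
def GLSeq (ε : ℝ) (u : ℝ × ℝ × ℝ → ℂ) (p : ℝ × ℝ × ℝ) : Prop :=
  Complex.I * pd et u p - lap u p + ((ε : ℂ) ^ 2)⁻¹ * (((‖u p‖ : ℝ) : ℂ) ^ 2 - 1) * u p = 0

/-- The Ginzburg–Landau energy density `E^ε(u) = ½|Du|² + (1/(4ε²))(|u|²−1)²`. -/
def Edens (ε : ℝ) (u : ℝ × ℝ × ℝ → ℂ) (p : ℝ × ℝ × ℝ) : ℝ :=
  (1 / 2) * (‖pd e1 u p‖ ^ 2 + ‖pd e2 u p‖ ^ 2) + (1 / (4 * ε ^ 2)) * (‖u p‖ ^ 2 - 1) ^ 2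

/-- The spatial unit directions indexed by `Fin 2`. -/
def dir : Fin 2 → ℝ × ℝ × ℝ := ![e1, e2]

/-- The matrix `𝕁` with `𝕁₁₂ = 1, 𝕁₂₁ = −1, 𝕁₁₁ = 𝕁₂₂ = 0`. -/
def Jmat : Fin 2 → Fin 2 → ℝ := ![![0, 1], ![-1, 0]]

/-- The spatial Jacobian determinant `Ju = det Du` of `u : ℝ² × I → ℂ ≃ ℝ²`. -/
def Jdet (u : ℝ × ℝ × ℝ → ℂ) (p : ℝ × ℝ × ℝ) : ℝ :=
  (pd e1 u p).re * (pd e2 u p).im - (pd e1 u p).im * (pd e2 u p).re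

/-! ### Auxiliary toolbox -/

namespace JEAux

open Complex

lemma rdot_eq (a b : ℂ) : rdot a b = @inner ℝ ℂ _ a b := by
  rw [rdot, mul_comm]; exact (Complex.inner a b).symm

lemma rdot_def (a b : ℂ) : rdot a b = a.re * b.re + a.im * b.im := by
  simp [rdot, Complex.mul_re]

lemma rdot_comm (a b : ℂ) : rdot a b = rdot b a := by simp [rdot_def]; ring

lemma rdot_self (a : ℂ) : rdot a a = ‖a‖ ^ 2 := by
  rw [rdot_eq]; exact real_inner_self_eq_norm_sq a

lemma rdot_add_left (a b c : ℂ) : rdot (a + b) c = rdot a c + rdot b c := by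
  simp [rdot_def]; ring

lemma rdot_add_right (a b c : ℂ) : rdot a (b + c) = rdot a b + rdot a c := by
  simp [rdot_def]; ring

lemma rdot_smul_left (r : ℝ) (a b : ℂ) : rdot (r • a) b = r * rdot a b := by
  simp [rdot_def, Complex.real_smul, Complex.mul_re, Complex.mul_im]; try ring

lemma rdot_smul_right (r : ℝ) (a b : ℂ) : rdot a (r • b) = r * rdot a b := by
  simp [rdot_def, Complex.real_smul, Complex.mul_re, Complex.mul_im]; try ring

lemma rdot_I_left (a b : ℂ) : rdot (Complex.I * a) b = -rdot a (Complex.I * b) := by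
  simp [rdot_def, Complex.mul_re, Complex.mul_im]; try ring

variable {E : Type*} [NormedAddCommGroup E] [NormedSpace ℝ E]
  {f g : ℝ × ℝ × ℝ → E} {v w : ℝ × ℝ × ℝ} {p : ℝ × ℝ × ℝ}

lemma _root_.ContDiffAt.pd (hf : ContDiffAt ℝ (⊤:ℕ∞) f p) : ContDiffAt ℝ (⊤:ℕ∞) (pd v f) p := by
  have h : ContDiffAt ℝ (⊤:ℕ∞) (fderiv ℝ f) p := hf.fderiv_right (le_refl _)
  exact h.clm_apply contDiffAt_const

lemma _root_.ContDiffAt.dAt (hf : ContDiffAt ℝ (⊤:ℕ∞) f p) : DifferentiableAt ℝ f p :=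
  hf.differentiableAt (by norm_cast)

lemma pd_congr (h : f =ᶠ[nhds p] g) : pd v f p = pd v g p := by
  unfold pd; rw [h.fderiv_eq]

lemma pd_comm (hf : ContDiffAt ℝ (⊤:ℕ∞) f p) : pd v (pd w f) p = pd w (pd v f) p := by
  have hsymm : IsSymmSndFDerivAt ℝ f p := hf.isSymmSndFDerivAt (by rw [minSmoothness_of_isRCLikeNormedField]; norm_cast)
  have hd : DifferentiableAt ℝ (fderiv ℝ f) p :=
    (hf.fderiv_right (m := 1) (by norm_cast)).differentiableAt one_ne_zero
  have h1 : pd v (pd w f) p = fderiv ℝ (fderiv ℝ f) p v w := by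
    show fderiv ℝ (fun q => fderiv ℝ f q w) p v = _
    rw [fderiv_clm_apply hd (differentiableAt_const _)]
    simp
  have h2 : pd w (pd v f) p = fderiv ℝ (fderiv ℝ f) p w v := by
    show fderiv ℝ (fun q => fderiv ℝ f q v) p w = _
    rw [fderiv_clm_apply hd (differentiableAt_const _)]
    simp
  rw [h1, h2, hsymm v w]

lemma pd_add (hf : DifferentiableAt ℝ f p) (hg : DifferentiableAt ℝ g p) :
    pd v (fun q => f q + g q) p = pd v f p + pd v g p := by
  unfold pd; rw [fderiv_fun_add hf hg]; rfl

lemma pd_sub (hf : DifferentiableAt ℝ f p) (hg : DifferentiableAt ℝ g p) :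
    pd v (fun q => f q - g q) p = pd v f p - pd v g p := by
  unfold pd; rw [fderiv_fun_sub hf hg]; rfl

lemma pd_sub_const (c : E) :
    pd v (fun q => f q - c) p = pd v f p := by
  unfold pd; rw [fderiv_sub_const]

lemma pd_rdot {f g : ℝ × ℝ × ℝ → ℂ} (hf : DifferentiableAt ℝ f p)
    (hg : DifferentiableAt ℝ g p) :
    pd v (fun q => rdot (f q) (g q)) p = rdot (pd v f p) (g p) + rdot (f p) (pd v g p) := by
  simp only [rdot_eq]
  have h := fderiv_inner_apply (𝕜 := ℝ) hf hg v
  show fderiv ℝ (fun q => @inner ℝ ℂ _ (f q) (g q)) p v = _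
  rw [h]
  simp only [pd]
  ring

lemma rdotc {f g : ℝ × ℝ × ℝ → ℂ} (hf : ContDiffAt ℝ (⊤:ℕ∞) f p)
    (hg : ContDiffAt ℝ (⊤:ℕ∞) g p) :
    ContDiffAt ℝ (⊤:ℕ∞) (fun q => rdot (f q) (g q)) p := by
  simp only [rdot_eq]
  exact hf.inner ℝ hg

lemma pd_const_mul {f : ℝ × ℝ × ℝ → ℂ} (c : ℂ) (hf : DifferentiableAt ℝ f p) :
    pd v (fun q => c * f q) p = c * pd v f p := by
  unfold pd; rw [fderiv_const_mul hf]; rfl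

lemma pd_const_mul_real {f : ℝ × ℝ × ℝ → ℝ} (c : ℝ) (hf : DifferentiableAt ℝ f p) :
    pd v (fun q => c * f q) p = c * pd v f p := by
  unfold pd; rw [fderiv_const_mul hf]; rfl

lemma pd_smul {r : ℝ × ℝ × ℝ → ℝ} {f : ℝ × ℝ × ℝ → ℂ}
    (hr : DifferentiableAt ℝ r p) (hf : DifferentiableAt ℝ f p) :
    pd v (fun q => r q • f q) p = pd v r p • f p + r p • pd v f p := by
  unfold pd; rw [fderiv_fun_smul hr hf]; simp; try ring

end JEAux

namespace JEAux

open Complex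

variable {u : ℝ × ℝ × ℝ → ℂ} {U : Set (ℝ × ℝ × ℝ)} {p : ℝ × ℝ × ℝ}

lemma rdot_sub_left (a b c : ℂ) : rdot (a - b) c = rdot a c - rdot b c := by
  simp [rdot_def]; ring

lemma rdot_sub_right (a b c : ℂ) : rdot a (b - c) = rdot a b - rdot a c := by
  simp [rdot_def]; ring

lemma swap3 (hU : IsOpen U) (hsm : ∀ q ∈ U, ContDiffAt ℝ (⊤:ℕ∞) u q) (hp : p ∈ U)
    (v w : ℝ × ℝ × ℝ) :
    pd v (pd w (pd w u)) p = pd w (pd w (pd v u)) p := by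
  have h1 : pd v (pd w (pd w u)) p = pd w (pd v (pd w u)) p :=
    pd_comm ((hsm p hp).pd)
  have h2 : pd v (pd w u) =ᶠ[nhds p] pd w (pd v u) := by
    filter_upwards [hU.mem_nhds hp] with q hq
    exact pd_comm (hsm q hq)
  rw [h1, pd_congr h2]

lemma key_rhs (hU : IsOpen U) (hsm : ∀ q ∈ U, ContDiffAt ℝ (⊤:ℕ∞) u q) (hp : p ∈ U)
    (w : ℝ × ℝ × ℝ) :
    pd w (fun q => pd e1 (fun q' => rdot (pd e2 u q') (pd w u q')) q) p
      - pd w (fun q => pd e2 (fun q' => rdot (pd e1 u q') (pd w u q')) q) p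
    = rdot (pd e2 u p) (pd w (pd w (pd e1 u)) p)
      - rdot (pd e1 u p) (pd w (pd w (pd e2 u)) p) := by
  have hsp := hsm p hp
  have hin1 : ∀ q ∈ U, ContDiffAt ℝ (⊤:ℕ∞) (fun q' => rdot (pd e2 u q') (pd w u q')) q :=
    fun q hq => rdotc ((hsm q hq).pd) ((hsm q hq).pd)
  have hin2 : ∀ q ∈ U, ContDiffAt ℝ (⊤:ℕ∞) (fun q' => rdot (pd e1 u q') (pd w u q')) q :=
    fun q hq => rdotc ((hsm q hq).pd) ((hsm q hq).pd)
  have hd1 : DifferentiableAt ℝ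
      (fun q => pd e1 (fun q' => rdot (pd e2 u q') (pd w u q')) q) p :=
    ((hin1 p hp).pd).dAt
  have hd2 : DifferentiableAt ℝ
      (fun q => pd e2 (fun q' => rdot (pd e1 u q') (pd w u q')) q) p :=
    ((hin2 p hp).pd).dAt
  have hsubst : (fun q => pd e1 (fun q' => rdot (pd e2 u q') (pd w u q')) q
        - pd e2 (fun q' => rdot (pd e1 u q') (pd w u q')) q)
      =ᶠ[nhds p] (fun q => rdot (pd e2 u q) (pd w (pd e1 u) q)
        - rdot (pd e1 u q) (pd w (pd e2 u) q)) := by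
    filter_upwards [hU.mem_nhds hp] with q hq
    have hq1 := hsm q hq
    rw [pd_rdot (hq1.pd.dAt) (hq1.pd.dAt), pd_rdot (hq1.pd.dAt) (hq1.pd.dAt)]
    rw [show pd e1 (pd e2 u) q = pd e2 (pd e1 u) q from pd_comm hq1,
        show pd e1 (pd w u) q = pd w (pd e1 u) q from pd_comm hq1,
        show pd e2 (pd w u) q = pd w (pd e2 u) q from pd_comm hq1]
    ring
  rw [← pd_sub hd1 hd2, pd_congr hsubst,
    pd_sub (rdotc hsp.pd hsp.pd.pd).dAt (rdotc hsp.pd hsp.pd.pd).dAt,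
    pd_rdot hsp.pd.dAt hsp.pd.pd.dAt, pd_rdot hsp.pd.dAt hsp.pd.pd.dAt,
    rdot_comm (pd w (pd e2 u) p) (pd w (pd e1 u) p)]
  ring

end JEAux

namespace JEAux

open Complex

variable {u : ℝ × ℝ × ℝ → ℂ} {U : Set (ℝ × ℝ × ℝ)} {p : ℝ × ℝ × ℝ}

theorem aux_main (hU : IsOpen U) (hsm : ∀ q ∈ U, ContDiffAt ℝ (⊤:ℕ∞) u q)
    (c : ℝ)
    (heq : ∀ q ∈ U, Complex.I * pd et u q
        = lap u q - (c * (rdot (u q) (u q) - 1)) • u q)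
    (hp : p ∈ U) :
    pd et (Jdet u) p
      = ∑ j : Fin 2, ∑ k : Fin 2, ∑ l : Fin 2,
          Jmat j k *
            pd (dir l) (fun q => pd (dir j)
              (fun q' => rdot (pd (dir k) u q') (pd (dir l) u q')) q) p := by
  have hsp := hsm p hp
  set ρ : ℝ × ℝ × ℝ → ℝ := fun q => c * (rdot (u q) (u q) - 1) with hρdef
  set g : ℝ × ℝ × ℝ → ℂ := fun q => lap u q - ρ q • u q with hgdef
  have hlapeq : lap u = fun q => pd e1 (pd e1 u) q + pd e2 (pd e2 u) q := rfl
  have hlap : ∀ q ∈ U, ContDiffAt ℝ (⊤:ℕ∞) (lap u) q := by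
    intro q hq; rw [hlapeq]; exact ((hsm q hq).pd.pd).add ((hsm q hq).pd.pd)
  have hρ : ∀ q ∈ U, ContDiffAt ℝ (⊤:ℕ∞) ρ q := by
    intro q hq
    exact contDiffAt_const.mul ((rdotc (hsm q hq) (hsm q hq)).sub contDiffAt_const)
  have hg : ∀ q ∈ U, ContDiffAt ℝ (⊤:ℕ∞) g q := by
    intro q hq
    exact (hlap q hq).sub ((hρ q hq).smul (hsm q hq))
  have hev : (fun q => Complex.I * pd et u q) =ᶠ[nhds p] g := by
    filter_upwards [hU.mem_nhds hp] with q hq; exact heq q hq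
  have hjdet : Jdet u = fun q => rdot (Complex.I * pd e1 u q) (pd e2 u q) := by
    funext q
    simp [Jdet, rdot_def, Complex.mul_re, Complex.mul_im]
    ring
  -- key: moving `I` and the time derivative through spatial derivatives
  have hkey2 : ∀ v : ℝ × ℝ × ℝ, Complex.I * pd v (pd et u) p = pd v g p := by
    intro v
    rw [← pd_const_mul Complex.I hsp.pd.dAt]
    exact pd_congr hev
  have hkey : ∀ v : ℝ × ℝ × ℝ,
      pd et (fun q => Complex.I * pd v u q) p = pd v g p := by
    intro v
    rw [pd_const_mul Complex.I hsp.pd.dAt, pd_comm hsp, hkey2 v]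
  -- Step 1: time derivative of the Jacobian
  have hL1 : pd et (Jdet u) p
      = rdot (pd e1 g p) (pd e2 u p) - rdot (pd e1 u p) (pd e2 g p) := by
    rw [hjdet, pd_rdot (hsp.pd.dAt.const_mul Complex.I) hsp.pd.dAt, hkey e1,
      show pd et (pd e2 u) p = pd e2 (pd et u) p from pd_comm hsp,
      rdot_I_left, hkey2 e2]
    ring
  -- Step 2: expanding the derivatives of g
  have hρd : ∀ v : ℝ × ℝ × ℝ, pd v ρ p = c * (2 * rdot (u p) (pd v u p)) := by
    intro v
    rw [hρdef]
    rw [pd_const_mul_real c (((rdotc hsp hsp).sub contDiffAt_const).dAt)]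
    rw [pd_sub_const, pd_rdot hsp.dAt hsp.dAt, rdot_comm (pd v u p) (u p)]
    ring
  have hgd : ∀ v : ℝ × ℝ × ℝ, pd v g p
      = pd v (lap u) p
        - ((c * (2 * rdot (u p) (pd v u p))) • u p + ρ p • pd v u p) := by
    intro v
    rw [hgdef]
    rw [pd_sub (g := fun q => ρ q • u q) (hlap p hp).dAt ((hρ p hp).smul hsp).dAt]
    rw [pd_smul (hρ p hp).dAt hsp.dAt, hρd v]
  -- Step 3: derivative of the Laplacian
  have hlapd : ∀ v : ℝ × ℝ × ℝ,
      pd v (lap u) p = pd e1 (pd e1 (pd v u)) p + pd e2 (pd e2 (pd v u)) p := by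
    intro v
    rw [hlapeq, pd_add (hsp.pd.pd.dAt) (hsp.pd.pd.dAt),
      swap3 hU hsm hp v e1, swap3 hU hsm hp v e2]
  -- Assemble the left-hand side
  have hLHS : pd et (Jdet u) p
      = (rdot (pd e2 u p) (pd e1 (pd e1 (pd e1 u)) p)
          - rdot (pd e1 u p) (pd e1 (pd e1 (pd e2 u)) p))
        + (rdot (pd e2 u p) (pd e2 (pd e2 (pd e1 u)) p)
          - rdot (pd e1 u p) (pd e2 (pd e2 (pd e2 u)) p)) := by
    rw [hL1, hgd e1, hgd e2, hlapd e1, hlapd e2]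
    rw [rdot_sub_left, rdot_sub_right, rdot_add_left, rdot_add_right,
      rdot_add_left, rdot_add_right, rdot_smul_left, rdot_smul_right,
      rdot_smul_left, rdot_smul_right,
      rdot_comm (pd e1 u p) (u p),
      rdot_comm (pd e1 (pd e1 (pd e1 u)) p) (pd e2 u p),
      rdot_comm (pd e2 (pd e2 (pd e1 u)) p) (pd e2 u p)]
    ring
  -- Assemble the right-hand side
  have hR1 := key_rhs hU hsm hp e1
  have hR2 := key_rhs hU hsm hp e2
  rw [hLHS]
  simp only [Fin.sum_univ_two, Jmat, dir, Matrix.cons_val_zero, Matrix.cons_val_one,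
    Matrix.head_cons, zero_mul, one_mul, neg_mul, add_zero, zero_add, neg_one_mul]
  linarith [hR1, hR2]

end JEAux

/-- if `u` is a smooth spatially ℤ²-periodic solution of GLS on `ℝ² × I`
(`I` an open interval), then pointwise
`∂ₜ(Ju) = Σ_{j,k,l} 𝕁_{jk} ∂_{x_l}∂_{x_j}(∂_{x_k}u · ∂_{x_l}u)`. -/
theorem jacobian_evolution
    (ε tA tB : ℝ) (hε : 0 < ε) (u : ℝ × ℝ × ℝ → ℂ)
    (hu : ContDiffOn ℝ (⊤ : ℕ∞) u {p : ℝ × ℝ × ℝ | p.2.2 ∈ Set.Ioo tA tB})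
    (hper : SpacePeriodic u)
    (heq : ∀ p : ℝ × ℝ × ℝ, p.2.2 ∈ Set.Ioo tA tB → GLSeq ε u p)
    (p : ℝ × ℝ × ℝ) (hp : p.2.2 ∈ Set.Ioo tA tB) :
    pd et (Jdet u) p
      = ∑ j : Fin 2, ∑ k : Fin 2, ∑ l : Fin 2,
          Jmat j k *
            pd (dir l) (fun q => pd (dir j)
              (fun q' => rdot (pd (dir k) u q') (pd (dir l) u q')) q) p := by
  have hU : IsOpen {q : ℝ × ℝ × ℝ | q.2.2 ∈ Set.Ioo tA tB} :=
    isOpen_Ioo.preimage (continuous_snd.snd)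
  have hsm : ∀ q ∈ {q : ℝ × ℝ × ℝ | q.2.2 ∈ Set.Ioo tA tB},
      ContDiffAt ℝ (⊤:ℕ∞) u q := fun q hq =>
    (hu.contDiffAt (hU.mem_nhds hq)).of_le (by simp)
  refine JEAux.aux_main hU hsm ((ε ^ 2)⁻¹) (fun q hq => ?_) hp
  have h := heq q hq
  unfold GLSeq at h
  have hc : (((ε ^ 2)⁻¹ * (rdot (u q) (u q) - 1)) : ℝ) • u q
      = ((ε : ℂ) ^ 2)⁻¹ * (((‖u q‖ : ℝ) : ℂ) ^ 2 - 1) * u q := by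
    rw [JEAux.rdot_self, Complex.real_smul]
    push_cast
    ring
  rw [hc]
  linear_combination h
end
end

section
/- Let T > 0, n ∈ ℕ, and suppose that for every t ∈ [0,T) there are points a₁(t), …, a_n(t) in the flat torus T² = ℝ²/ℤ² such that μ_t = Σ_{i=1}^n δ_{a_i(t)}. Then the map t ↦ μ_t from [0,T) into the space of signed measures equipped with the M¹(T²) norm is Lipschitz continuous if and only if there exist Lipschitz maps b₁, …, b_n: [0,T) → T² such that μ_t = Σ_{i=1}^n δ_{b_i(t)} for every t ∈ [0,T). -/
noncomputable section

open MeasureTheory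

/-- The flat torus `T² = ℝ²/ℤ²`. -/
abbrev T2 : Type := AddCircle (1:ℝ) × AddCircle (1:ℝ)

/-- The projection `ℝ² → T²`. -/
def proj (x : ℝ × ℝ) : T2 := ((x.1 : AddCircle (1:ℝ)), (x.2 : AddCircle (1:ℝ)))

/-- `φ : T² → ℝ` is of class `C¹`, witnessed by a `C¹` lift `ψ` to `ℝ²`. -/
def IsC1 (φ : T2 → ℝ) (ψ : ℝ × ℝ → ℝ) : Prop :=
  ContDiff ℝ 1 ψ ∧ ∀ x : ℝ × ℝ, φ (proj x) = ψ x

/-- Integration of a (continuous) function against a finite signed measure, via the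
Jordan decomposition. -/
def spair (μ : SignedMeasure T2) (φ : T2 → ℝ) : ℝ :=
  (∫ y, φ y ∂μ.toJordanDecomposition.posPart) -
    ∫ y, φ y ∂μ.toJordanDecomposition.negPart

/-- The `M¹(T²)` norm of a finite signed measure: the dual norm over
`C¹` test functions `φ` with `‖φ‖_∞ + ‖Dφ‖_∞ ≤ 1`. -/
def M1norm (μ : SignedMeasure T2) : ℝ :=
  sSup {r : ℝ | ∃ φ : T2 → ℝ, ∃ ψ : ℝ × ℝ → ℝ, IsC1 φ ψ ∧
    (⨆ x : ℝ × ℝ, |ψ x|) + (⨆ x : ℝ × ℝ, ‖fderiv ℝ ψ x‖) ≤ 1 ∧ r = spair μ φ}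

/-- The Dirac mass at a point of `T²`, as a signed measure. -/
def diracSM (p : T2) : SignedMeasure T2 := (Measure.dirac p).toSignedMeasure

/-!
Test functions with `‖φ‖_∞ + ‖Dφ‖_∞ ≤ 1` are `1`-Lipschitz on `T²`, so Lipschitz paths `bᵢ` give
an `M¹`-Lipschitz path of measures.

Conversely, the `M¹` norm dominates the bottleneck matching distance of `n`-point configurations:
if `δ > C ‖Σ δ_{pᵢ} - Σ δ_{qᵢ}‖_{M¹}`, testing against `h (1 - ∏_{i ∈ S} (1 - bump_δ (· - pᵢ)))`,
with bumps of Lipschitz constant `O(1/δ)` and `h ≈ δ`, verifies Hall's condition for the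
relation `dist (pᵢ, qⱼ) ≤ δ`. Hence for all times `s, t` some relabelling of `a(t)` is
`C K |s - t|`-close to `a(s)`. On a finite set of times these relabellings chain, in increasing
order, into one that is `C K`-Lipschitz; since there are finitely many permutations, an
ultrafilter on the finite sets of times glues them into a Lipschitz relabelling on all of `[0, T)`.
-/

open Filter Real

lemma Finite.exists_forall_le_of_forall_lt {α ι : Type*} [Finite α] {g : α → ι → ℝ} {a : ℝ}
    (h : ∀ δ > a, ∃ x, ∀ i, g x i ≤ δ) : ∃ x, ∀ i, g x i ≤ a := by
  by_contra! hne
  choose j hj using hne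
  obtain ⟨x, -⟩ := h (a + 1) (by linarith)
  have : Nonempty α := ⟨x⟩
  obtain ⟨x₀, hx₀⟩ := Finite.exists_min fun x => g x (j x)
  obtain ⟨x, hx⟩ := h ((a + g x₀ (j x₀)) / 2) (by linarith [hj x₀])
  linarith [hx (j x), hx₀ x, hj x₀]

lemma norm_mul_sub_mul_le {R : Type*} [SeminormedRing R] {a b c d : R} (ha : ‖a‖ ≤ 1)
    (hd : ‖d‖ ≤ 1) : ‖a * b - c * d‖ ≤ ‖a - c‖ + ‖b - d‖ :=
  calc ‖a * b - c * d‖ = ‖a * (b - d) + (a - c) * d‖ := by noncomm_ring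
    _ ≤ ‖a‖ * ‖b - d‖ + ‖a - c‖ * ‖d‖ :=
        (norm_add_le _ _).trans (add_le_add (norm_mul_le _ _) (norm_mul_le _ _))
    _ ≤ ‖b - d‖ + ‖a - c‖ := by
        gcongr
        · exact mul_le_of_le_one_left (norm_nonneg _) ha
        · exact mul_le_of_le_one_right (norm_nonneg _) hd
    _ = ‖a - c‖ + ‖b - d‖ := add_comm _ _

lemma Finset.norm_prod_sub_prod_le {ι R : Type*} [NormedCommRing R] [NormOneClass R]
    (s : Finset ι) {f g : ι → R} (hf : ∀ i ∈ s, ‖f i‖ ≤ 1) (hg : ∀ i ∈ s, ‖g i‖ ≤ 1) :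
    ‖∏ i ∈ s, f i - ∏ i ∈ s, g i‖ ≤ ∑ i ∈ s, ‖f i - g i‖ := by
  classical
  induction s using Finset.induction_on with
  | empty => simp
  | insert a s has ih =>
    simp only [Finset.mem_insert, forall_eq_or_imp] at hf hg
    rw [Finset.prod_insert has, Finset.prod_insert has, Finset.sum_insert has]
    have hgs : ‖∏ i ∈ s, g i‖ ≤ 1 :=
      (Finset.norm_prod_le _ _).trans (Finset.prod_le_one (fun _ _ => norm_nonneg _) hg.2)
    exact (norm_mul_sub_mul_le hf.1 hgs).trans (add_le_add le_rfl (ih hf.2 hg.2))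

section Relabel

variable {X ι : Type*} [PseudoMetricSpace X]

lemma exists_perm_lipschitz_finset {L : ℝ} (f : ℝ → ι → X) (D : Finset ℝ)
    (hf : ∀ s ∈ D, ∀ t ∈ D, ∃ σ : Equiv.Perm ι, ∀ i, dist (f s i) (f t (σ i)) ≤ L * |s - t|) :
    ∃ σ : ℝ → Equiv.Perm ι, ∀ s ∈ D, ∀ t ∈ D, s ≤ t → ∀ i,
      dist (f s (σ s i)) (f t (σ t i)) ≤ L * (t - s) := by
  classical
  induction D using Finset.induction_on_max with
  | empty => exact ⟨fun _ => 1, by simp⟩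
  | insert a D haD ih =>
    obtain ⟨σ, hσ⟩ := ih fun s hs t ht => hf s (by simp [hs]) t (by simp [ht])
    rcases D.eq_empty_or_nonempty with rfl | hne
    · exact ⟨σ, by simp⟩
    set m := D.max' hne
    have hmD : m ∈ D := D.max'_mem hne
    obtain ⟨τ, hτ⟩ := hf m (by simp [hmD]) a (by simp)
    have hma : m < a := haD m hmD
    -- `a` is matched to the largest earlier time `m`; as `s ≤ m < a`, the two bounds add up
    have hnew : ∀ s ∈ D, ∀ i, dist (f s (σ s i)) (f a (τ (σ m i))) ≤ L * (a - s) := by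
      intro s hs i
      calc dist (f s (σ s i)) (f a (τ (σ m i)))
          ≤ dist (f s (σ s i)) (f m (σ m i)) + dist (f m (σ m i)) (f a (τ (σ m i))) :=
            dist_triangle _ _ _
        _ ≤ L * (m - s) + L * |m - a| := add_le_add (hσ s hs m hmD (D.le_max' s hs) i) (hτ _)
        _ = L * (a - s) := by rw [abs_of_neg (sub_neg.2 hma)]; ring
    refine ⟨Function.update σ a ((σ m).trans τ), ?_⟩
    have hne' : ∀ s ∈ D, s ≠ a := fun s hs h => (haD s hs).ne h
    simp only [Finset.mem_insert]
    rintro s (rfl | hs) t (rfl | ht) hst i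
    · simp
    · exact absurd hst (not_le.2 (haD t ht))
    · simpa [hne' s hs] using hnew s hs i
    · simpa [hne' s hs, hne' t ht] using hσ s hs t ht hst i

lemma exists_perm_lipschitz [Finite ι] {L : ℝ} {I : Set ℝ} (f : ℝ → ι → X)
    (hf : ∀ s ∈ I, ∀ t ∈ I, ∃ σ : Equiv.Perm ι, ∀ i, dist (f s i) (f t (σ i)) ≤ L * |s - t|) :
    ∃ σ : ℝ → Equiv.Perm ι, ∀ s ∈ I, ∀ t ∈ I, ∀ i,
      dist (f s (σ s i)) (f t (σ t i)) ≤ L * |s - t| := by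
  classical
  choose σD hσD using fun D : Finset ℝ => exists_perm_lipschitz_finset f (D.filter (· ∈ I))
    fun s hs t ht => hf s (Finset.mem_filter.1 hs).2 t (Finset.mem_filter.1 ht).2
  -- compactness: along an ultrafilter finer than `atTop`, each `σD D t` is eventually constant
  let 𝒰 := Ultrafilter.of (atTop : Filter (Finset ℝ))
  choose σ hσ using fun t => (𝒰.map fun D => σD D t).eq_pure_of_finite
  have hev : ∀ t, ∀ᶠ D in (𝒰 : Filter (Finset ℝ)), σD D t = σ t := fun t =>
    Ultrafilter.mem_map.1 (show {σ t} ∈ 𝒰.map fun D => σD D t by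
      rw [hσ t]; exact Set.mem_singleton _)
  have hsub : ∀ s t, ∀ᶠ D in (𝒰 : Filter (Finset ℝ)), s ∈ D ∧ t ∈ D := fun s t =>
    Ultrafilter.of_le _ ((eventually_ge_atTop {s, t}).mono fun D hD =>
      ⟨hD (by simp), hD (by simp)⟩)
  suffices key : ∀ s ∈ I, ∀ t ∈ I, s ≤ t → ∀ i,
      dist (f s (σ s i)) (f t (σ t i)) ≤ L * (t - s) by
    refine ⟨σ, fun s hs t ht i => ?_⟩
    rcases le_total s t with hst | hts
    · rw [abs_of_nonpos (sub_nonpos.2 hst), neg_sub]; exact key s hs t ht hst i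
    · rw [abs_of_nonneg (sub_nonneg.2 hts), dist_comm]; exact key t ht s hs hts i
  intro s hs t ht hst i
  obtain ⟨D, hDs, hDt, hsD, htD⟩ := ((hev s).and ((hev t).and (hsub s t))).exists
  have := hσD D s (Finset.mem_filter.2 ⟨hsD, hs⟩) t (Finset.mem_filter.2 ⟨htD, ht⟩) hst i
  rwa [hDs, hDt] at this

end Relabel

lemma proj_add (x y : ℝ × ℝ) : proj (x + y) = proj x + proj y := rfl

lemma proj_sub (x y : ℝ × ℝ) : proj (x - y) = proj x - proj y := rfl

lemma proj_surjective : Function.Surjective proj := by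
  rintro ⟨⟨x⟩, ⟨y⟩⟩
  exact ⟨(x, y), rfl⟩

lemma proj_add_intCast (x : ℝ × ℝ) (k l : ℤ) : proj (x + ((k : ℝ), (l : ℝ))) = proj x := by
  have h : ∀ m : ℤ, ((m : ℝ) : AddCircle (1 : ℝ)) = 0 := fun m =>
    (AddCircle.coe_eq_zero_iff _).2 ⟨m, by simp⟩
  rw [proj_add]
  simp [proj, h]

lemma isOpenQuotientMap_proj : IsOpenQuotientMap proj :=
  QuotientAddGroup.isOpenQuotientMap_mk.prodMap QuotientAddGroup.isOpenQuotientMap_mk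

lemma AddCircle.exists_coe_eq_abs_eq_norm (z : AddCircle (1 : ℝ)) :
    ∃ u : ℝ, (u : AddCircle (1 : ℝ)) = z ∧ |u| = ‖z‖ := by
  obtain ⟨x, rfl⟩ := QuotientAddGroup.mk_surjective z
  refine ⟨x - round x, ?_, (UnitAddCircle.norm_eq (x := x)).symm⟩
  rw [AddCircle.coe_sub, sub_eq_self]
  exact (AddCircle.coe_eq_zero_iff _).2 ⟨round x, by simp⟩

lemma exists_proj_eq_norm_eq (w : T2) : ∃ u : ℝ × ℝ, proj u = w ∧ ‖u‖ = ‖w‖ := by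
  obtain ⟨u₁, h₁, hn₁⟩ := AddCircle.exists_coe_eq_abs_eq_norm w.1
  obtain ⟨u₂, h₂, hn₂⟩ := AddCircle.exists_coe_eq_abs_eq_norm w.2
  exact ⟨(u₁, u₂), Prod.ext h₁ h₂, by simp [Prod.norm_def, hn₁, hn₂]⟩

lemma exists_proj_proj_dist_eq (y z : T2) :
    ∃ x x' : ℝ × ℝ, proj x = y ∧ proj x' = z ∧ dist x x' = dist y z := by
  obtain ⟨x, rfl⟩ := proj_surjective y
  obtain ⟨u, hu, hnu⟩ := exists_proj_eq_norm_eq (proj x - z)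
  refine ⟨x, x - u, rfl, by rw [proj_sub, hu, sub_sub_cancel], ?_⟩
  rw [dist_eq_norm, dist_eq_norm, sub_sub_cancel, hnu]

lemma dist_le_half (y z : T2) : dist y z ≤ 1 / 2 := by
  rw [Prod.dist_eq]
  refine max_le ?_ ?_ <;>
  · rw [dist_eq_norm]
    simpa using AddCircle.norm_le_half_period (1 : ℝ) one_ne_zero

lemma sin_pi_mul_le_abs_sin_pi_mul {δ v : ℝ} (hδ : 0 ≤ δ) (hv : δ ≤ ‖(v : AddCircle (1 : ℝ))‖) :
    sin (π * δ) ≤ |sin (π * v)| := by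
  set u := v - round v
  have hu : |u| ≤ 1 / 2 := abs_sub_round v
  have hvu : |sin (π * v)| = sin (π * |u|) := by
    have hπu : |π * u| ≤ π := by rw [abs_mul, abs_of_pos pi_pos]; nlinarith [pi_pos]
    have : π * v = π * u + round v * π := by ring
    rw [this, sin_add_int_mul_pi, abs_mul, abs_zpow, abs_neg, abs_one, one_zpow, one_mul,
      abs_sin_eq_sin_abs_of_abs_le_pi hπu, abs_mul, abs_of_pos pi_pos]
  rw [hvu]
  have hδu : δ ≤ |u| := by rwa [UnitAddCircle.norm_eq] at hv
  apply sin_le_sin_of_le_of_le_pi_div_two <;> nlinarith [pi_pos]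

def IsM1Test (φ : T2 → ℝ) (ψ : ℝ × ℝ → ℝ) : Prop :=
  IsC1 φ ψ ∧ (⨆ x : ℝ × ℝ, |ψ x|) + (⨆ x : ℝ × ℝ, ‖fderiv ℝ ψ x‖) ≤ 1

lemma isCompact_range_of_forall_add_intCast {α : Type*} [TopologicalSpace α] {f : ℝ × ℝ → α}
    (hf : Continuous f) (hper : ∀ x (k l : ℤ), f (x + ((k : ℝ), (l : ℝ))) = f x) :
    IsCompact (Set.range f) := by
  convert (isCompact_Icc.prod isCompact_Icc).image hf using 1
  refine (Set.image_subset_range _ _).antisymm' ?_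
  rintro - ⟨x, rfl⟩
  refine ⟨(Int.fract x.1, Int.fract x.2), ⟨⟨Int.fract_nonneg _, (Int.fract_lt_one _).le⟩,
    ⟨Int.fract_nonneg _, (Int.fract_lt_one _).le⟩⟩, ?_⟩
  simpa [Int.fract_add_floor] using (hper (Int.fract x.1, Int.fract x.2) ⌊x.1⌋ ⌊x.2⌋).symm

namespace IsC1

variable {φ : T2 → ℝ} {ψ : ℝ × ℝ → ℝ}

lemma add_intCast (h : IsC1 φ ψ) (x : ℝ × ℝ) (k l : ℤ) : ψ (x + ((k : ℝ), (l : ℝ))) = ψ x := by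
  rw [← h.2, ← h.2, proj_add_intCast]

lemma continuous (h : IsC1 φ ψ) : Continuous φ := by
  rw [← isOpenQuotientMap_proj.continuous_comp_iff, show φ ∘ proj = ψ from funext h.2]
  exact h.1.continuous

lemma bddAbove_abs (h : IsC1 φ ψ) : BddAbove (Set.range fun x => |ψ x|) :=
  (isCompact_range_of_forall_add_intCast h.1.continuous.abs
    fun x k l => by rw [h.add_intCast]).bddAbove

lemma bddAbove_norm_fderiv (h : IsC1 φ ψ) : BddAbove (Set.range fun x => ‖fderiv ℝ ψ x‖) := by
  refine (isCompact_range_of_forall_add_intCast (h.1.continuous_fderiv one_ne_zero).norm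
    fun x k l => ?_).bddAbove
  rw [← fderiv_comp_add_right, funext fun y => h.add_intCast y k l]

end IsC1

namespace IsM1Test

variable {φ : T2 → ℝ} {ψ : ℝ × ℝ → ℝ}

lemma abs_le_one (h : IsM1Test φ ψ) (y : T2) : |φ y| ≤ 1 := by
  obtain ⟨x, rfl⟩ := proj_surjective y
  rw [h.1.2]
  linarith [le_ciSup h.1.bddAbove_abs x, h.2,
    Real.iSup_nonneg fun x => norm_nonneg (fderiv ℝ ψ x)]

lemma lipschitzWith (h : IsM1Test φ ψ) : LipschitzWith 1 φ := by
  have hψ : LipschitzWith 1 ψ := by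
    refine lipschitzWith_of_nnnorm_fderiv_le (h.1.1.differentiable one_ne_zero) fun x => ?_
    rw [← NNReal.coe_le_coe, coe_nnnorm, NNReal.coe_one]
    linarith [le_ciSup h.1.bddAbove_norm_fderiv x, h.2,
      Real.iSup_nonneg fun x => abs_nonneg (ψ x)]
  refine LipschitzWith.of_dist_le_mul fun y z => ?_
  obtain ⟨x, x', rfl, rfl, hxx'⟩ := exists_proj_proj_dist_eq y z
  simpa [h.1.2, hxx'] using hψ.dist_le_mul x x'

lemma of_bounds (hφ : IsC1 φ ψ) {A L : ℝ} (hA : ∀ x, |ψ x| ≤ A) (hL₀ : 0 ≤ L)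
    (hL : ∀ x y, |ψ x - ψ y| ≤ L * ‖x - y‖) (hAL : A + L ≤ 1) : IsM1Test φ ψ := by
  refine ⟨hφ, le_trans (add_le_add (ciSup_le hA) (ciSup_le fun x => ?_)) hAL⟩
  exact norm_fderiv_le_of_lip' ℝ hL₀ (Eventually.of_forall fun y => hL y x)

end IsM1Test

lemma spair_toSignedMeasure_sub (P Q : Measure T2) [IsFiniteMeasure P] [IsFiniteMeasure Q]
    {φ : T2 → ℝ} (hφ : Continuous φ) :
    spair (P.toSignedMeasure - Q.toSignedMeasure) φ = (∫ y, φ y ∂P) - ∫ y, φ y ∂Q := by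
  set j := (P.toSignedMeasure - Q.toSignedMeasure).toJordanDecomposition
  have hint : ∀ (ν : Measure T2) [IsFiniteMeasure ν], Integrable φ ν := fun ν _ =>
    hφ.integrable_of_hasCompactSupport (HasCompactSupport.of_compactSpace φ)
  -- `j⁺ - j⁻ = P - Q` rearranges to an identity between (unsigned) finite measures
  have hjPQ : j.posPart + Q = j.negPart + P := by
    have hj : j.posPart.toSignedMeasure - j.negPart.toSignedMeasure =
        P.toSignedMeasure - Q.toSignedMeasure :=
      SignedMeasure.toSignedMeasure_toJordanDecomposition _
    rw [← Measure.toSignedMeasure_eq_toSignedMeasure_iff, Measure.toSignedMeasure_add,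
      Measure.toSignedMeasure_add]
    linear_combination (norm := abel1) sub_eq_sub_iff_add_eq_add.mp hj
  have := congrArg (fun ν => ∫ y, φ y ∂ν) hjPQ
  simp only [integral_add_measure (hint _) (hint _)] at this
  unfold spair
  linarith

lemma sum_diracSM {ι : Type*} (s : Finset ι) (p : ι → T2) :
    ∑ i ∈ s, diracSM (p i) = (∑ i ∈ s, Measure.dirac (p i)).toSignedMeasure := by
  classical
  induction s using Finset.induction_on with
  | empty => simp [Measure.toSignedMeasure_zero]
  | insert a s has ih =>
    simp_rw [Finset.sum_insert has, ih, diracSM, Measure.toSignedMeasure_add]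

lemma spair_sum_diracSM_sub {ι : Type*} [Fintype ι] (p q : ι → T2) {φ : T2 → ℝ}
    (hφ : Continuous φ) :
    spair (∑ i, diracSM (p i) - ∑ i, diracSM (q i)) φ = ∑ i, φ (p i) - ∑ i, φ (q i) := by
  have hint : ∀ y, Integrable φ (Measure.dirac y) := fun y =>
    hφ.integrable_of_hasCompactSupport (HasCompactSupport.of_compactSpace φ)
  rw [sum_diracSM, sum_diracSM, spair_toSignedMeasure_sub _ _ hφ,
    integral_finsetSum_measure fun i _ => hint _, integral_finsetSum_measure fun i _ => hint _]
  simp [integral_dirac]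

lemma IsM1Test.spair_le_M1norm {φ : T2 → ℝ} {ψ : ℝ × ℝ → ℝ} (h : IsM1Test φ ψ)
    (μ : SignedMeasure T2) : spair μ φ ≤ M1norm μ := by
  set j := μ.toJordanDecomposition
  refine le_csSup ⟨j.posPart.real Set.univ + j.negPart.real Set.univ, ?_⟩
    ⟨φ, ψ, h.1, h.2, rfl⟩
  rintro - ⟨φ', ψ', h₁, h₂, rfl⟩
  have hb : ∀ (ν : Measure T2) [IsFiniteMeasure ν], |∫ y, φ' y ∂ν| ≤ ν.real Set.univ :=
    fun ν _ => by
      simpa [Real.norm_eq_abs] using norm_integral_le_of_norm_le_const (μ := ν) (C := 1)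
        (f := φ') (Eventually.of_forall fun y => IsM1Test.abs_le_one ⟨h₁, h₂⟩ y)
  unfold spair
  linarith [(abs_le.1 (hb j.posPart)).2, (abs_le.1 (hb j.negPart)).1]

lemma M1norm_le {μ : SignedMeasure T2} {B : ℝ} (hB : 0 ≤ B)
    (h : ∀ φ ψ, IsM1Test φ ψ → spair μ φ ≤ B) : M1norm μ ≤ B :=
  Real.sSup_le (fun _ ⟨φ, ψ, h₁, h₂, hr⟩ => hr ▸ h φ ψ ⟨h₁, h₂⟩) hB

lemma M1norm_nonneg (μ : SignedMeasure T2) : 0 ≤ M1norm μ := by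
  have h : IsM1Test 0 0 := ⟨⟨contDiff_const, fun _ => rfl⟩, by simp⟩
  simpa [spair] using h.spair_le_M1norm μ

lemma M1norm_sum_diracSM_sub_le {ι : Type*} [Fintype ι] (p q : ι → T2) :
    M1norm (∑ i, diracSM (p i) - ∑ i, diracSM (q i)) ≤ ∑ i, dist (p i) (q i) := by
  refine M1norm_le (Finset.sum_nonneg fun _ _ => dist_nonneg) fun φ ψ h => ?_
  rw [spair_sum_diracSM_sub p q h.1.continuous, ← Finset.sum_sub_distrib]
  gcongr with i
  simpa using (le_abs_self _).trans (h.lipschitzWith.dist_le_mul (p i) (q i))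

def profile (u : ℝ) : ℝ := smoothTransition (1 - u ^ 2)

lemma contDiff_profile : ContDiff ℝ 1 profile :=
  smoothTransition.contDiff.comp (by fun_prop)

lemma profile_zero : profile 0 = 1 := by simp [profile]

lemma profile_neg (u : ℝ) : profile (-u) = profile u := by simp [profile]

lemma profile_mem_Icc (u : ℝ) : profile u ∈ Set.Icc (0 : ℝ) 1 :=
  ⟨smoothTransition.nonneg _, smoothTransition.le_one _⟩

lemma profile_eq_zero {u : ℝ} (hu : 1 ≤ |u|) : profile u = 0 :=
  smoothTransition.zero_of_nonpos (by nlinarith [sq_abs u])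

lemma exists_lipschitzWith_profile : ∃ M, LipschitzWith M profile := by
  refine contDiff_profile.lipschitzWith_of_hasCompactSupport
    (HasCompactSupport.intro (isCompact_Icc (a := -1) (b := 1)) fun u hu => ?_) one_ne_zero
  exact profile_eq_zero (le_abs.2 (by simp only [Set.mem_Icc, not_and_or, not_le] at hu; grind))

def circleBump (r v : ℝ) : ℝ := profile (sin (π * v) / r)

lemma circleBump_periodic (r : ℝ) : Function.Periodic (circleBump r) 1 := fun v => by
  simp [circleBump, mul_add, sin_add_pi, neg_div, profile_neg]

lemma contDiff_circleBump (r : ℝ) : ContDiff ℝ 1 (circleBump r) :=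
  contDiff_profile.comp (by fun_prop)

lemma circleBump_zero (r : ℝ) : circleBump r 0 = 1 := by simp [circleBump, profile_zero]

lemma circleBump_mem_Icc (r v : ℝ) : circleBump r v ∈ Set.Icc (0 : ℝ) 1 := profile_mem_Icc _

lemma circleBump_eq_zero {r v : ℝ} (hr : 0 < r) (hv : r ≤ |sin (π * v)|) : circleBump r v = 0 :=
  profile_eq_zero (by rwa [abs_div, abs_of_pos hr, one_le_div hr])

lemma abs_circleBump_sub_le {M : NNReal} (hM : LipschitzWith M profile) {r : ℝ} (hr : 0 < r)
    (u v : ℝ) : |circleBump r u - circleBump r v| ≤ M * π / r * |u - v| :=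
  calc |circleBump r u - circleBump r v| ≤ M * |sin (π * u) / r - sin (π * v) / r| := by
        simpa [Real.dist_eq, circleBump] using hM.dist_le_mul (sin (π * u) / r) (sin (π * v) / r)
    _ = M / r * |sin (π * u) - sin (π * v)| := by
        rw [← sub_div, abs_div, abs_of_pos hr]; ring
    _ ≤ M / r * |π * u - π * v| := by gcongr ?_ * ?_; exact abs_sin_sub_sin_le _ _
    _ = M * π / r * |u - v| := by rw [← mul_sub, abs_mul, abs_of_pos pi_pos]; ring

def torusBump (r : ℝ) (z : T2) : ℝ :=
  (circleBump_periodic r).lift z.1 * (circleBump_periodic r).lift z.2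

lemma torusBump_proj (r : ℝ) (x : ℝ × ℝ) :
    torusBump r (proj x) = circleBump r x.1 * circleBump r x.2 := rfl

lemma torusBump_zero (r : ℝ) : torusBump r 0 = 1 := by
  rw [show (0 : T2) = proj 0 from rfl, torusBump_proj, Prod.fst_zero, Prod.snd_zero,
    circleBump_zero, mul_one]

lemma torusBump_mem_Icc (r : ℝ) (z : T2) : torusBump r z ∈ Set.Icc (0 : ℝ) 1 := by
  obtain ⟨x, rfl⟩ := proj_surjective z
  obtain ⟨h₁, h₁'⟩ := circleBump_mem_Icc r x.1
  obtain ⟨h₂, h₂'⟩ := circleBump_mem_Icc r x.2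
  rw [torusBump_proj]
  exact ⟨mul_nonneg h₁ h₂, mul_le_one₀ h₁' h₂ h₂'⟩

lemma torusBump_eq_zero {δ : ℝ} (hδ : 0 < δ) (hδ' : δ ≤ 1 / 2) {z : T2} (hz : δ < ‖z‖) :
    torusBump (sin (π * δ)) z = 0 := by
  have hr : 0 < sin (π * δ) := sin_pos_of_pos_of_lt_pi (by positivity) (by nlinarith [pi_pos])
  obtain ⟨x, rfl⟩ := proj_surjective z
  rw [Prod.norm_def] at hz
  rw [torusBump_proj]
  rcases lt_max_iff.1 hz with h | h
  · rw [circleBump_eq_zero hr (sin_pi_mul_le_abs_sin_pi_mul hδ.le h.le), zero_mul]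
  · rw [circleBump_eq_zero hr (sin_pi_mul_le_abs_sin_pi_mul hδ.le h.le), mul_zero]

lemma contDiff_torusBump_proj_sub (r : ℝ) (w : T2) :
    ContDiff ℝ 1 fun x => torusBump r (proj x - w) := by
  obtain ⟨c, rfl⟩ := proj_surjective w
  simp_rw [← proj_sub, torusBump_proj]
  exact ((contDiff_circleBump r).comp (by fun_prop)).mul
    ((contDiff_circleBump r).comp (by fun_prop))

lemma abs_torusBump_proj_sub_le {M : NNReal} (hM : LipschitzWith M profile) {r : ℝ} (hr : 0 < r)
    (w : T2) (x y : ℝ × ℝ) :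
    |torusBump r (proj x - w) - torusBump r (proj y - w)| ≤ 2 * M * π / r * ‖x - y‖ := by
  obtain ⟨c, rfl⟩ := proj_surjective w
  simp_rw [← proj_sub, torusBump_proj]
  have hβ : ∀ v, ‖circleBump r v‖ ≤ 1 := fun v => by
    obtain ⟨h₀, h₁⟩ := circleBump_mem_Icc r v
    rwa [Real.norm_eq_abs, abs_of_nonneg h₀]
  have h₁ := abs_circleBump_sub_le hM hr (x - c).1 (y - c).1
  have h₂ := abs_circleBump_sub_le hM hr (x - c).2 (y - c).2
  have hn₁ : |(x - c).1 - (y - c).1| ≤ ‖x - y‖ := by simpa using norm_fst_le (x - y)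
  have hn₂ : |(x - c).2 - (y - c).2| ≤ ‖x - y‖ := by simpa using norm_snd_le (x - y)
  calc _ ≤ |circleBump r (x - c).1 - circleBump r (y - c).1|
        + |circleBump r (x - c).2 - circleBump r (y - c).2| :=
        norm_mul_sub_mul_le (hβ _) (hβ _)
    _ ≤ M * π / r * ‖x - y‖ + M * π / r * ‖x - y‖ := by
        gcongr
        exacts [h₁.trans (by gcongr), h₂.trans (by gcongr)]
    _ = 2 * M * π / r * ‖x - y‖ := by ring

section Matching

variable {ι : Type*}

def clusterBump (r : ℝ) (p : ι → T2) (s : Finset ι) (y : T2) : ℝ :=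
  1 - ∏ i ∈ s, (1 - torusBump r (y - p i))

lemma one_sub_torusBump_mem_Icc (r : ℝ) (z : T2) : 1 - torusBump r z ∈ Set.Icc (0 : ℝ) 1 := by
  obtain ⟨h₀, h₁⟩ := torusBump_mem_Icc r z
  constructor <;> linarith

lemma clusterBump_mem_Icc (r : ℝ) (p : ι → T2) (s : Finset ι) (y : T2) :
    clusterBump r p s y ∈ Set.Icc (0 : ℝ) 1 := by
  have h₀ := Finset.prod_nonneg fun i (_ : i ∈ s) => (one_sub_torusBump_mem_Icc r (y - p i)).1
  have h₁ := Finset.prod_le_one (fun i (_ : i ∈ s) => (one_sub_torusBump_mem_Icc r (y - p i)).1)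
    fun i _ => (one_sub_torusBump_mem_Icc r (y - p i)).2
  unfold clusterBump
  constructor <;> linarith

lemma clusterBump_apply_of_mem (r : ℝ) (p : ι → T2) {s : Finset ι} {i : ι} (hi : i ∈ s) :
    clusterBump r p s (p i) = 1 := by
  simp [clusterBump, Finset.prod_eq_zero hi, torusBump_zero]

lemma clusterBump_eq_zero {δ : ℝ} (hδ : 0 < δ) (hδ' : δ ≤ 1 / 2) (p : ι → T2) {s : Finset ι}
    {y : T2} (hy : ∀ i ∈ s, δ < dist y (p i)) : clusterBump (sin (π * δ)) p s y = 0 := by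
  rw [clusterBump, Finset.prod_eq_one fun i hi => ?_, sub_self]
  rw [torusBump_eq_zero hδ hδ' (by rw [← dist_eq_norm]; exact hy i hi), sub_zero]

/-- The height `h` at which `h • clusterBump r p s` is admissible: its sup norm `h` plus its
Lipschitz constant `h N (2 M π / r)` is `1`. -/
def clusterHeight (N : ℕ) (M : NNReal) (r : ℝ) : ℝ := (1 + N * (2 * M * π / r))⁻¹

variable [Fintype ι]

lemma isM1Test_clusterBump {M : NNReal} (hM : LipschitzWith M profile) {r : ℝ}
    (hr : 0 < r) (p : ι → T2) (s : Finset ι) :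
    IsM1Test (fun y => clusterHeight (Fintype.card ι) M r * clusterBump r p s y)
      (fun x => clusterHeight (Fintype.card ι) M r * clusterBump r p s (proj x)) := by
  set K := 2 * M * π / r
  set h := clusterHeight (Fintype.card ι) M r with h_def
  have hh : 0 < h := by unfold h clusterHeight; positivity
  have hC1 : IsC1 (fun y => h * clusterBump r p s y) (fun x => h * clusterBump r p s (proj x)) :=
    ⟨contDiff_const.mul (contDiff_const.sub
      (contDiff_prod fun i _ => contDiff_const.sub (contDiff_torusBump_proj_sub r (p i)))),
      fun _ => rfl⟩
  refine IsM1Test.of_bounds hC1 (A := h) (L := h * (Fintype.card ι * K)) (fun x => ?_)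
    (by positivity) (fun x y => ?_)
    (by rw [← mul_one_add, h_def, clusterHeight, inv_mul_cancel₀ (by positivity)])
  · obtain ⟨h₀, h₁⟩ := clusterBump_mem_Icc r p s (proj x)
    rw [abs_of_nonneg (by positivity)]
    exact mul_le_of_le_one_right hh.le h₁
  · have hnorm : ∀ z, ∀ i ∈ s, ‖1 - torusBump r (z - p i)‖ ≤ 1 := fun z i _ => by
      obtain ⟨h₀, h₁⟩ := one_sub_torusBump_mem_Icc r (z - p i)
      rwa [Real.norm_eq_abs, abs_of_nonneg h₀]
    have hprod := Finset.norm_prod_sub_prod_le s (hnorm (proj x)) (hnorm (proj y))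
    simp only [Real.norm_eq_abs, sub_sub_sub_cancel_left] at hprod
    calc |h * clusterBump r p s (proj x) - h * clusterBump r p s (proj y)|
        = h * |∏ i ∈ s, (1 - torusBump r (proj x - p i)) -
            ∏ i ∈ s, (1 - torusBump r (proj y - p i))| := by
          rw [← mul_sub, abs_mul, abs_of_pos hh, clusterBump, clusterBump, sub_sub_sub_cancel_left,
            abs_sub_comm]
      _ ≤ h * ∑ i ∈ s, K * ‖x - y‖ := by
          gcongr
          refine hprod.trans (Finset.sum_le_sum fun i _ => ?_)
          rw [abs_sub_comm]
          exact abs_torusBump_proj_sub_le hM hr (p i) x y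
      _ ≤ h * (Fintype.card ι * K) * ‖x - y‖ := by
          rw [Finset.sum_const, nsmul_eq_mul, mul_assoc, ← mul_assoc (s.card : ℝ)]
          gcongr
          exact_mod_cast s.card_le_univ

lemma card_le_card_biUnion_of_M1norm_lt [DecidableEq ι] {M : NNReal}
    (hM : LipschitzWith M profile) {δ : ℝ} (hδ : 0 < δ) (hδ' : δ ≤ 1 / 2) (p q : ι → T2)
    (hpq : M1norm (∑ i, diracSM (p i) - ∑ i, diracSM (q i)) <
      clusterHeight (Fintype.card ι) M (sin (π * δ))) (s : Finset ι) :
    s.card ≤ (s.biUnion fun i => {j | dist (p i) (q j) ≤ δ}).card := by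
  set h := clusterHeight (Fintype.card ι) M (sin (π * δ))
  set t := s.biUnion fun i => {j | dist (p i) (q j) ≤ δ}
  have hr : 0 < sin (π * δ) := sin_pos_of_pos_of_lt_pi (by positivity) (by nlinarith [pi_pos])
  have hh : 0 < h := by unfold h clusterHeight; positivity
  have hφ := isM1Test_clusterBump hM hr p s
  have hspair := hφ.spair_le_M1norm (∑ i, diracSM (p i) - ∑ i, diracSM (q i))
  rw [spair_sum_diracSM_sub p q hφ.1.continuous] at hspair
  have hsum : ∀ u : Finset ι, ∑ i, (if i ∈ u then h else 0) = h * u.card := fun u => by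
    rw [Finset.sum_ite_mem, Finset.univ_inter, Finset.sum_const, nsmul_eq_mul, mul_comm]
  have hp : h * s.card ≤ ∑ i, h * clusterBump (sin (π * δ)) p s (p i) := by
    rw [← hsum]
    gcongr with i
    split_ifs with hi
    · rw [clusterBump_apply_of_mem _ p hi, mul_one]
    · exact mul_nonneg hh.le (clusterBump_mem_Icc _ p s _).1
  have hq : ∑ j, h * clusterBump (sin (π * δ)) p s (q j) ≤ h * t.card := by
    rw [← hsum]
    gcongr with j
    split_ifs with hj
    · exact mul_le_of_le_one_right hh.le (clusterBump_mem_Icc _ p s _).2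
    · rw [clusterBump_eq_zero hδ hδ' p fun i hi => ?_, mul_zero]
      by_contra! hij
      exact hj (Finset.mem_biUnion.2 ⟨i, hi, by simpa [dist_comm] using hij⟩)
  have : h * s.card < h * (t.card + 1) := by linarith
  exact Nat.lt_succ_iff.1 (by exact_mod_cast lt_of_mul_lt_mul_left this hh.le)

lemma exists_perm_dist_le_of_M1norm_lt {M : NNReal} (hM : LipschitzWith M profile) {δ : ℝ}
    (hδ : 0 < δ) (hδ' : δ ≤ 1 / 2) (p q : ι → T2)
    (hpq : M1norm (∑ i, diracSM (p i) - ∑ i, diracSM (q i)) <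
      clusterHeight (Fintype.card ι) M (sin (π * δ))) :
    ∃ σ : Equiv.Perm ι, ∀ i, dist (p i) (q (σ i)) ≤ δ := by
  classical
  obtain ⟨f, hf, hfδ⟩ := (Finset.all_card_le_biUnion_card_iff_exists_injective _).1
    (card_le_card_biUnion_of_M1norm_lt hM hδ hδ' p q hpq)
  exact ⟨Equiv.ofBijective f hf.bijective_of_finite, fun i => by simpa using hfδ i⟩

lemma exists_perm_dist_le_mul_M1norm :
    ∃ C : ℝ, 0 ≤ C ∧ ∀ p q : ι → T2, ∃ σ : Equiv.Perm ι,
      ∀ i, dist (p i) (q (σ i)) ≤ C * M1norm (∑ i, diracSM (p i) - ∑ i, diracSM (q i)) := by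
  obtain ⟨M, hM⟩ := exists_lipschitzWith_profile
  set N : ℝ := (Fintype.card ι : ℝ)
  refine ⟨1 + N * M * π, by positivity, fun p q =>
    Finite.exists_forall_le_of_forall_lt fun δ hδ => ?_⟩
  set m := M1norm (∑ i, diracSM (p i) - ∑ i, diracSM (q i))
  have hm : 0 ≤ m := M1norm_nonneg _
  rcases le_or_gt (1 / 2) δ with hδ' | hδ'
  · exact ⟨1, fun i => (dist_le_half _ _).trans hδ'⟩
  have hδ₀ : 0 < δ := lt_of_le_of_lt (by positivity) hδ
  refine exists_perm_dist_le_of_M1norm_lt hM hδ₀ hδ'.le p q ?_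
  -- Jordan's inequality `2 δ ≤ sin (π δ)` makes the bump's Lipschitz constant `O(1/δ)`
  have hsin : 2 * δ ≤ sin (π * δ) := by
    have := mul_le_sin (x := π * δ) (by positivity) (by nlinarith [pi_pos])
    rwa [← mul_assoc, div_mul_cancel₀ _ pi_pos.ne'] at this
  have hr : 0 < sin (π * δ) := by linarith
  have hK : 2 * M * π / sin (π * δ) ≤ M * π / δ := by
    rw [div_le_div_iff₀ hr hδ₀]
    nlinarith [mul_le_mul_of_nonneg_left hsin (by positivity : (0 : ℝ) ≤ M * π)]
  rw [clusterHeight, ← one_div, lt_div_iff₀ (by positivity)]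
  calc m * (1 + N * (2 * M * π / sin (π * δ))) ≤ m * (1 + N * (M * π / δ)) := by gcongr
    _ = (m * δ + m * (N * M * π)) / δ := by field_simp
    _ ≤ (1 + N * M * π) * m / δ := by gcongr; nlinarith
    _ < 1 := by rwa [div_lt_one hδ₀]

end Matching

theorem dirac_sum_lipschitz_iff_lipschitz_paths_general
    (T : ℝ) (n : ℕ)
    (μ : ℝ → SignedMeasure T2) (a : ℝ → Fin n → T2)
    (hμ : ∀ t ∈ Set.Ico (0:ℝ) T, μ t = ∑ i, diracSM (a t i)) :
    (∃ K : ℝ, 0 ≤ K ∧ ∀ s ∈ Set.Ico (0:ℝ) T, ∀ t ∈ Set.Ico (0:ℝ) T,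
        M1norm (μ s - μ t) ≤ K * |s - t|)
      ↔ ∃ b : Fin n → ℝ → T2,
          (∃ K : ℝ, 0 ≤ K ∧ ∀ i, ∀ s ∈ Set.Ico (0:ℝ) T, ∀ t ∈ Set.Ico (0:ℝ) T,
            dist (b i s) (b i t) ≤ K * |s - t|) ∧
          ∀ t ∈ Set.Ico (0:ℝ) T, μ t = ∑ i, diracSM (b i t) := by
  constructor
  · rintro ⟨K, hK, hlip⟩
    obtain ⟨C, hC₀, hC⟩ := exists_perm_dist_le_mul_M1norm (ι := Fin n)
    obtain ⟨σ, hσ⟩ := exists_perm_lipschitz (L := C * K) (I := Set.Ico 0 T) a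
      fun s hs t ht => by
        obtain ⟨σ, hσ⟩ := hC (a s) (a t)
        refine ⟨σ, fun i => (hσ i).trans ?_⟩
        rw [← hμ s hs, ← hμ t ht, mul_assoc]
        exact mul_le_mul_of_nonneg_left (hlip s hs t ht) hC₀
    refine ⟨fun i t => a t (σ t i), ⟨C * K, by positivity, fun i s hs t ht => hσ s hs t ht i⟩,
      fun t ht => ?_⟩
    rw [hμ t ht]
    exact (Equiv.sum_comp (σ t) fun i => diracSM (a t i)).symm
  · rintro ⟨b, ⟨K, hK, hb⟩, hbμ⟩
    refine ⟨n * K, by positivity, fun s hs t ht => ?_⟩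
    rw [hbμ s hs, hbμ t ht]
    calc _ ≤ ∑ i, dist (b i s) (b i t) := M1norm_sum_diracSM_sub_le _ _
      _ ≤ ∑ i : Fin n, K * |s - t| := Finset.sum_le_sum fun i _ => hb i s hs t ht
      _ = n * K * |s - t| := by simp [mul_assoc]

/-- if for each `t ∈ [0,T)` the signed measure `μ_t` is a sum of `n`
Dirac masses `Σᵢ δ_{aᵢ(t)}`, then `t ↦ μ_t` is Lipschitz into `(M¹(T²), ‖·‖)` iff
there are Lipschitz maps `b₁, …, b_n : [0,T) → T²` with `μ_t = Σᵢ δ_{bᵢ(t)}` for all `t`. -/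
theorem dirac_sum_lipschitz_iff_lipschitz_paths
    (T : ℝ) (hT : 0 < T) (n : ℕ)
    (μ : ℝ → SignedMeasure T2) (a : ℝ → Fin n → T2)
    (hμ : ∀ t ∈ Set.Ico (0:ℝ) T, μ t = ∑ i, diracSM (a t i)) :
    (∃ K : ℝ, 0 ≤ K ∧ ∀ s ∈ Set.Ico (0:ℝ) T, ∀ t ∈ Set.Ico (0:ℝ) T,
        M1norm (μ s - μ t) ≤ K * |s - t|)
      ↔ ∃ b : Fin n → ℝ → T2,
          (∃ K : ℝ, 0 ≤ K ∧ ∀ i, ∀ s ∈ Set.Ico (0:ℝ) T, ∀ t ∈ Set.Ico (0:ℝ) T,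
            dist (b i s) (b i t) ≤ K * |s - t|) ∧
          ∀ t ∈ Set.Ico (0:ℝ) T, μ t = ∑ i, diracSM (b i t) :=
  dirac_sum_lipschitz_iff_lipschitz_paths_general T n μ a hμ
end
end

section
/- Let Ω ⊆ ℝ² be open and connected, and let H, H̃: Ω → ℂ be continuously differentiable maps with |H(x)| = |H̃(x)| = 1 for all x ∈ Ω. If j(H̃) = j(H) on Ω, then there exists α ∈ ℝ such that H̃ = e^{iα} H on Ω. -/
noncomputable section

/-- The planar unit directions indexed by `Fin 2`. -/
def dir2 : Fin 2 → ℝ × ℝ := ![(1, 0), (0, 1)]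

/-- The current `jᵏ(u) = (iu)·∂_{x_k}u` of a map `u : ℝ² → ℂ`. -/
def jcur (u : ℝ × ℝ → ℂ) (k : Fin 2) (x : ℝ × ℝ) : ℝ :=
  rdot (Complex.I * u x) (fderiv ℝ u x (dir2 k))

/-! For unit maps `u` one has `Du = i (j(u)·v) u`, so two unit maps with the same current
satisfy the same linear equation, and the quotient `H̃ · conj H` has zero derivative.
On a connected open set it is therefore a constant, necessarily of modulus one. -/

open Complex ComplexConjugate Filter Topology

theorem inner_self_fderiv_eq_zero_of_norm_eventually_eq
    {E F : Type*} [NormedAddCommGroup E] [NormedSpace ℝ E]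
    [NormedAddCommGroup F] [InnerProductSpace ℝ F]
    {u : E → F} {x : E} {c : ℝ} (hu : DifferentiableAt ℝ u x)
    (hc : ∀ᶠ y in 𝓝 x, ‖u y‖ = c) (v : E) :
    inner ℝ (u x) (fderiv ℝ u x v) = 0 := by
  have hconst : HasFDerivAt (‖u ·‖ ^ 2) (0 : E →L[ℝ] ℝ) x :=
    (hasFDerivAt_const (c ^ 2) x).congr_of_eventuallyEq (hc.mono fun y hy => by simp [hy])
  have h := congrArg (· v) (hu.hasFDerivAt.norm_sq.unique hconst)
  simpa using h

theorem jcur_eq_im (u : ℝ × ℝ → ℂ) (k : Fin 2) (x : ℝ × ℝ) :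
    jcur u k x = (conj (u x) * fderiv ℝ u x (dir2 k)).im := by
  simp only [jcur, rdot, map_mul, conj_I, mul_re, mul_im, neg_re, neg_im, I_re, I_im,
    conj_re, conj_im]
  ring

theorem conj_mul_fderiv_eq_I_mul_jcur {u : ℝ × ℝ → ℂ} {x : ℝ × ℝ} {c : ℝ}
    (hu : DifferentiableAt ℝ u x) (hc : ∀ᶠ y in 𝓝 x, ‖u y‖ = c) (v : ℝ × ℝ) :
    conj (u x) * fderiv ℝ u x v = I * ↑(v.1 * jcur u 0 x + v.2 * jcur u 1 x) := by
  have hDv : fderiv ℝ u x v = v.1 • fderiv ℝ u x (dir2 0) + v.2 • fderiv ℝ u x (dir2 1) := by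
    rw [← map_smul, ← map_smul, ← map_add]
    congr 1
    simp [dir2]
  apply Complex.ext
  · have h := inner_self_fderiv_eq_zero_of_norm_eventually_eq hu hc v
    rw [Complex.inner, mul_comm] at h
    simp [h]
  · simp only [I_mul_im, ofReal_re, hDv, mul_add, mul_smul_comm, add_im, smul_im, smul_eq_mul,
      jcur_eq_im]

theorem fderiv_apply_eq_I_mul_jcur_mul {u : ℝ × ℝ → ℂ} {x : ℝ × ℝ}
    (hu : DifferentiableAt ℝ u x) (h1 : ∀ᶠ y in 𝓝 x, ‖u y‖ = 1) (v : ℝ × ℝ) :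
    fderiv ℝ u x v = I * ↑(v.1 * jcur u 0 x + v.2 * jcur u 1 x) * u x := by
  have hunit : u x * conj (u x) = 1 := by
    rw [mul_conj, normSq_eq_norm_sq, h1.self_of_nhds]; norm_num
  rw [← conj_mul_fderiv_eq_I_mul_jcur hu h1 v]
  linear_combination (-(fderiv ℝ u x v)) * hunit

theorem hasFDerivAt_mul_conj_eq_zero_of_jcur_eq {H Ht : ℝ × ℝ → ℂ} {x : ℝ × ℝ}
    (hH : DifferentiableAt ℝ H x) (hHt : DifferentiableAt ℝ Ht x)
    (hH1 : ∀ᶠ y in 𝓝 x, ‖H y‖ = 1) (hHt1 : ∀ᶠ y in 𝓝 x, ‖Ht y‖ = 1)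
    (hj : ∀ k, jcur Ht k x = jcur H k x) :
    HasFDerivAt (fun y => Ht y * conj (H y)) (0 : ℝ × ℝ →L[ℝ] ℂ) x := by
  refine (hHt.hasFDerivAt.mul hH.hasFDerivAt.star).congr_fderiv ?_
  refine ContinuousLinearMap.ext fun v => ?_
  simp only [RCLike.star_def, add_apply, smul_apply, ContinuousLinearMap.comp_apply,
    ContinuousLinearEquiv.coe_coe, starL'_apply, smul_eq_mul, zero_apply]
  rw [fderiv_apply_eq_I_mul_jcur_mul hH hH1, fderiv_apply_eq_I_mul_jcur_mul hHt hHt1, hj, hj]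
  simp only [map_mul, conj_I, conj_ofReal]
  ring

/-- if `Ω ⊆ ℝ²` is open and connected, `H, H̃ : Ω → ℂ` are `C¹` with
`|H| = |H̃| = 1` on `Ω`, and `j(H̃) = j(H)` on `Ω`, then `H̃ = e^{iα} H` on `Ω`
for some `α ∈ ℝ`. -/
theorem unit_maps_with_equal_current_differ_by_phase
    (Ω : Set (ℝ × ℝ)) (hΩo : IsOpen Ω) (hΩc : IsConnected Ω)
    (H Ht : ℝ × ℝ → ℂ)
    (hH : ContDiffOn ℝ 1 H Ω) (hHt : ContDiffOn ℝ 1 Ht Ω)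
    (hH1 : ∀ x ∈ Ω, ‖H x‖ = 1) (hHt1 : ∀ x ∈ Ω, ‖Ht x‖ = 1)
    (hj : ∀ x ∈ Ω, ∀ k : Fin 2, jcur Ht k x = jcur H k x) :
    ∃ α : ℝ, ∀ x ∈ Ω, Ht x = Complex.exp ((α : ℂ) * Complex.I) * H x := by
  have hderiv : ∀ x ∈ Ω, HasFDerivAt (fun y => Ht y * conj (H y)) (0 : ℝ × ℝ →L[ℝ] ℂ) x :=
    fun x hx => hasFDerivAt_mul_conj_eq_zero_of_jcur_eq
      (hH.differentiableOn one_ne_zero |>.differentiableAt (hΩo.mem_nhds hx))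
      (hHt.differentiableOn one_ne_zero |>.differentiableAt (hΩo.mem_nhds hx))
      (eventually_of_mem (hΩo.mem_nhds hx) hH1) (eventually_of_mem (hΩo.mem_nhds hx) hHt1)
      (hj x hx)
  obtain ⟨c, hc⟩ := hΩo.exists_is_const_of_fderiv_eq_zero hΩc.isPreconnected
    (fun x hx => (hderiv x hx).differentiableAt.differentiableWithinAt)
    (fun x hx => (hderiv x hx).fderiv)
  obtain ⟨x₀, hx₀⟩ := hΩc.nonempty
  have hc1 : ‖c‖ = 1 := by rw [← hc x₀ hx₀, norm_mul, norm_conj, hH1 x₀ hx₀, hHt1 x₀ hx₀, one_mul]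
  refine ⟨arg c, fun x hx => ?_⟩
  have hunit : conj (H x) * H x = 1 := by
    rw [conj_mul', hH1 x hx]; norm_num
  have hexp : exp (arg c * I) = c := by simpa [hc1] using norm_mul_exp_arg_mul_I c
  rw [hexp, ← hc x hx]
  linear_combination (-(Ht x)) * hunit
end
end
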